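/- Let g : {0,1}^n → ℝ^n be monotone increasing and u ∈ ℝ̄^n. With e_u^i(x) = E(u[i:=x]), the function e_u^i is constant on the region where its i-th coordinate equals 1: for any x', x'' with (e_u^i(x'))_i = 1 = (e_u^i(x''))_i, we have e_u^i(x') = e_u^i(x''). -/

import Mathlib

/-!
`E(v)` is the least prefixed point of the monotone map `G_v`: the iterates of `G_v` from `0`
increase, and each strict step switches on one more coordinate, so after `n` steps they are
stuck at a fixed point, which lies below every prefixed point. The maps `G_{u[i:=x']}` and
`G_{u[i:=x'']}` differ only in coordinate `i`, so a fixed point of one whose `i`-th coordinate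
is `1` is a prefixed point of the other; hence `E(u[i:=x'])` and `E(u[i:=x''])` lie below each
other.
-/

open Function

/-- Best-response map: `G_u(y) i = 𝟙(g(y)_i ≥ u_i)`, comparisons in the extended reals. -/
noncomputable def Gmap {n : ℕ} (g : (Fin n → Bool) → Fin n → ℝ) (u : Fin n → EReal)
    (y : Fin n → Bool) : Fin n → Bool :=
  fun i => decide (u i ≤ ((g y i : ℝ) : EReal))

/-- Minimal equilibrium: `E(u) = (G_u)^[n](0)`. -/
noncomputable def Emin {n : ℕ} (g : (Fin n → Bool) → Fin n → ℝ) (u : Fin n → EReal) : Fin n → Bool :=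
  (Gmap g u)^[n] (fun _ => false)

section Iterate

variable {α : Type*} [PartialOrder α] {f : α → α}

theorem Monotone.map_iterate_eq_of_strictMono_le (hf : Monotone f) {x : α} (hx : x ≤ f x)
    {w : α → ℕ} (hw : StrictMono w) {N : ℕ} (hN : ∀ y, w y ≤ N) :
    f (f^[N] x) = f^[N] x := by
  have hchain := hf.monotone_iterate_of_le_map hx
  have step (k : ℕ) : f^[k + 1] x = f^[k] x ∨ w (f^[k] x) < w (f^[k + 1] x) :=
    (eq_or_lt_of_le (hchain k.le_succ)).imp Eq.symm (fun h => hw h)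
  -- Until the chain stops, the weight grows by at least one per step.
  have key (k : ℕ) : f^[k + 1] x = f^[k] x ∨ k < w (f^[k + 1] x) := by
    induction k with
    | zero => exact (step 0).imp_right (Nat.zero_le _).trans_lt
    | succ k ih =>
      rcases ih with hfix | hlt
      · left
        rw [iterate_succ_apply', hfix, ← iterate_succ_apply' f k]
        exact hfix
      · exact (step (k + 1)).imp_right (by omega)
  rw [← iterate_succ_apply' f N]
  exact (key N).resolve_right (not_lt.mpr (hN _))

theorem Monotone.iterate_le_of_map_le (hf : Monotone f) {x y : α} (hxy : x ≤ y) (hy : f y ≤ y)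
    (k : ℕ) : f^[k] x ≤ y :=
  (hf.iterate k hxy).trans (hf.antitone_iterate_of_map_le hy (Nat.zero_le k))

end Iterate

theorem strictMono_card_filter_eq_true {ι : Type*} [Fintype ι] :
    StrictMono fun y : ι → Bool => (Finset.univ.filter fun j => y j = true).card := by
  intro y z hyz
  obtain ⟨hle, j, hj⟩ := Pi.lt_def.mp hyz
  refine Finset.card_lt_card ((Finset.ssubset_iff_of_subset ?_).mpr ⟨j, ?_⟩)
  · intro k
    simpa using Bool.le_iff_imp.mp (hle k)
  · simp_all [Bool.lt_iff]

section Equilibrium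

variable {n : ℕ} {g : (Fin n → Bool) → Fin n → ℝ}

theorem Gmap_monotone (hg : Monotone g) (u : Fin n → EReal) : Monotone (Gmap g u) := by
  intro y z hyz j
  simp only [Gmap, Bool.le_iff_imp, decide_eq_true_iff]
  exact fun h => h.trans (by exact_mod_cast hg hyz j)

theorem Gmap_Emin (hg : Monotone g) (u : Fin n → EReal) : Gmap g u (Emin g u) = Emin g u :=
  (Gmap_monotone hg u).map_iterate_eq_of_strictMono_le (fun _ => Bool.false_le _)
    strictMono_card_filter_eq_true
    (fun _ => (Finset.card_filter_le _ _).trans_eq (Finset.card_fin n))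

theorem Emin_le_of_Gmap_le (hg : Monotone g) {u : Fin n → EReal} {y : Fin n → Bool}
    (hy : Gmap g u y ≤ y) : Emin g u ≤ y :=
  (Gmap_monotone hg u).iterate_le_of_map_le (fun _ => Bool.false_le _) hy n

theorem Gmap_update_le_of_apply_eq_true {u : Fin n → EReal} {i : Fin n} {x' x'' : EReal}
    {y : Fin n → Bool} (hy : Gmap g (update u i x'') y ≤ y) (hyi : y i = true) :
    Gmap g (update u i x') y ≤ y := by
  intro j
  rcases eq_or_ne j i with rfl | hj
  · simp [hyi]
  · simpa [Gmap, hj] using hy j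

theorem Emin_update_le_of_apply_eq_true (hg : Monotone g) {u : Fin n → EReal} {i : Fin n}
    (x' : EReal) {x'' : EReal} (h'' : Emin g (update u i x'') i = true) :
    Emin g (update u i x') ≤ Emin g (update u i x'') :=
  Emin_le_of_Gmap_le hg (Gmap_update_le_of_apply_eq_true (Gmap_Emin hg _).le h'')

end Equilibrium

/-- `e_u^i` is constant on the region where its `i`-th coordinate is `1`. -/
theorem Emin_update_constant_on_one_region {n : ℕ} (g : (Fin n → Bool) → Fin n → ℝ)
    (hg : Monotone g) (u : Fin n → EReal) (i : Fin n) (x' x'' : EReal)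
    (h' : Emin g (Function.update u i x') i = true)
    (h'' : Emin g (Function.update u i x'') i = true) :
    Emin g (Function.update u i x') = Emin g (Function.update u i x'') :=
  le_antisymm (Emin_update_le_of_apply_eq_true hg x' h'')
    (Emin_update_le_of_apply_eq_true hg x'' h')
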